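/- Let G = (V,E) be a finite simple graph with a 1-critical bifiltration given by crit : E → ℝ², let e = {a,b} be an edge of G, and let v be a vertex distinct from a and b. Then e is strongly filtration-dominated by v if and only if the following two conditions hold: (i) {a,v} ∈ E and {b,v} ∈ E with crit({a,v}) ≤ crit(e) and crit({b,v}) ≤ crit(e); and (ii) for every edge neighbor w of e in G with w ≠ v, {v,w} ∈ E and crit({v,w}) ≤ crit_e(w). -/

import Mathlib

/-- The subgraph of `G` at grade `c` in a 1-critical bifiltration: it keeps
exactly the edges whose critical grade is `≤ c` (componentwise order on `ℝ²`). -/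
def gradedSubgraph {V : Type*} (G : SimpleGraph V) (crit : Sym2 V → ℝ × ℝ)
    (c : ℝ × ℝ) : SimpleGraph V where
  Adj u v := G.Adj u v ∧ crit s(u, v) ≤ c
  symm := by
    refine ⟨fun u v h => ?_⟩
    refine ⟨h.1.symm, ?_⟩
    rw [Sym2.eq_swap]
    exact h.2
  loopless := ⟨fun u h => G.loopless.irrefl u h.1⟩

/-- `w` is an edge neighbor of the edge `{a,b}` in `H`: it is adjacent to both endpoints. -/
def edgeNbr {V : Type*} (H : SimpleGraph V) (a b w : V) : Prop :=
  H.Adj a w ∧ H.Adj b w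

/-- The edge `{a,b}` is dominated by `v` in `H`. -/
def dominatedBy {V : Type*} (H : SimpleGraph V) (a b v : V) : Prop :=
  edgeNbr H a b v ∧ ∀ w, edgeNbr H a b w → w ≠ v → H.Adj v w

/-- The edge `{a,b}` is dominated in `H` (by some vertex). -/
def dominated {V : Type*} (H : SimpleGraph V) (a b : V) : Prop :=
  ∃ v, dominatedBy H a b v

/-- `crit_e(w) = crit(e) ∗ crit({a,w}) ∗ crit({b,w})`, the grade at which `w`
becomes an edge neighbor of `e = {a,b}`. -/
def critE {V : Type*} (crit : Sym2 V → ℝ × ℝ) (a b w : V) : ℝ × ℝ :=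
  crit s(a, b) ⊔ crit s(a, w) ⊔ crit s(b, w)

/-- The set `C = {crit(e)} ∪ {crit_e(w₁) ∗ crit_e(w₂) : w₁, w₂ ∈ N_G(e)}`. -/
def critJoins {V : Type*} (G : SimpleGraph V) (crit : Sym2 V → ℝ × ℝ)
    (a b : V) : Set (ℝ × ℝ) :=
  {crit s(a, b)} ∪
    {x | ∃ w₁ w₂, edgeNbr G a b w₁ ∧ edgeNbr G a b w₂ ∧
      x = critE crit a b w₁ ⊔ critE crit a b w₂}

/-- `Δ(p,q) = {r : p ≤ r ∧ ¬ q ≤ r}`. -/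
def Delta (p q : ℝ × ℝ) : Set (ℝ × ℝ) := {r | p ≤ r ∧ ¬ q ≤ r}

/-!
For `c ≥ crit(e)`, a vertex `w` is an edge neighbor of `e` in `G_c` exactly when it is one in `G`
with `crit_e(w) ≤ c`. Domination by `v` at every grade above `crit(e)` is therefore decided at the
least grades involved: `c = crit(e)` for `v` itself, and `c = crit_e(w)` for every other edge
neighbor `w`.
-/

section

variable {V : Type*} (G : SimpleGraph V) (crit : Sym2 V → ℝ × ℝ)

theorem critE_le_iff {a b w : V} {c : ℝ × ℝ} :
    critE crit a b w ≤ c ↔ crit s(a, b) ≤ c ∧ crit s(a, w) ≤ c ∧ crit s(b, w) ≤ c := by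
  simp only [critE, sup_le_iff, and_assoc]

theorem crit_le_critE (a b w : V) : crit s(a, b) ≤ critE crit a b w :=
  ((critE_le_iff crit).1 le_rfl).1

theorem edgeNbr_gradedSubgraph_iff {a b w : V} {c : ℝ × ℝ} (hc : crit s(a, b) ≤ c) :
    edgeNbr (gradedSubgraph G crit c) a b w ↔ edgeNbr G a b w ∧ critE crit a b w ≤ c := by
  simp only [edgeNbr, gradedSubgraph, critE_le_iff, hc, true_and]
  tauto

end

theorem stronglyFiltrationDominatedBy_iff_general
    {V : Type*} (G : SimpleGraph V) (crit : Sym2 V → ℝ × ℝ)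
    (a b v : V) :
    (∀ c : ℝ × ℝ, crit s(a, b) ≤ c → dominatedBy (gradedSubgraph G crit c) a b v) ↔
      ((G.Adj a v ∧ G.Adj b v ∧
          crit s(a, v) ≤ crit s(a, b) ∧ crit s(b, v) ≤ crit s(a, b)) ∧
        ∀ w, edgeNbr G a b w → w ≠ v →
          G.Adj v w ∧ crit s(v, w) ≤ critE crit a b w) := by
  constructor
  · intro hdom
    obtain ⟨⟨hav, hbv⟩, -⟩ := hdom _ le_rfl
    refine ⟨⟨hav.1, hbv.1, hav.2, hbv.2⟩, fun w hw hwv => ?_⟩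
    have hcw := crit_le_critE crit a b w
    exact (hdom _ hcw).2 w ((edgeNbr_gradedSubgraph_iff G crit hcw).2 ⟨hw, le_rfl⟩) hwv
  · rintro ⟨⟨hav, hbv, hcav, hcbv⟩, hnbrs⟩ c hc
    refine ⟨⟨⟨hav, hcav.trans hc⟩, hbv, hcbv.trans hc⟩, fun w hw hwv => ?_⟩
    obtain ⟨hw, hwc⟩ := (edgeNbr_gradedSubgraph_iff G crit hc).1 hw
    obtain ⟨hvw, hcvw⟩ := hnbrs w hw hwv
    exact ⟨hvw, hcvw.trans hwc⟩

/-- characterization of strong filtration-domination.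
`e = {a,b}` is strongly filtration-dominated by `v` iff (i) `v` is a potential
strong dominator, and (ii) every other edge neighbor `w` of `e` satisfies
`{v,w} ∈ E` with `crit({v,w}) ≤ crit_e(w)`. -/
theorem stronglyFiltrationDominatedBy_iff
    {V : Type*} [Fintype V] (G : SimpleGraph V) (crit : Sym2 V → ℝ × ℝ)
    (a b v : V) (hab : G.Adj a b) (hva : v ≠ a) (hvb : v ≠ b) :
    (∀ c : ℝ × ℝ, crit s(a, b) ≤ c → dominatedBy (gradedSubgraph G crit c) a b v) ↔
      ((G.Adj a v ∧ G.Adj b v ∧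
          crit s(a, v) ≤ crit s(a, b) ∧ crit s(b, v) ≤ crit s(a, b)) ∧
        ∀ w, edgeNbr G a b w → w ≠ v →
          G.Adj v w ∧ crit s(v, w) ≤ critE crit a b w) :=
  stronglyFiltrationDominatedBy_iff_general G crit a b v
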